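/- For σ ≥ 0 and k ∈ ℤ define H_σ(k) = i·k·e^{−k²σ} ∈ ℂ. For σ > 0 and k₁ ∈ ℤ set V(σ, k₁) = (1/2) ∑_{k₂ ∈ ℤ, k₂ ≠ 0} H_σ(k₁ + k₂) · e^{−k₂² σ} (the series converges absolutely for each σ > 0). Then for every ε ∈ (0, 1] there exists a constant C > 0 such that for all k₁ ∈ ℤ with k₁ ≠ 0 one has ∫₀^∞ |V(σ, k₁)| dσ ≤ C · |k₁|^ε, where |·| denotes the complex modulus. -/

import Mathlib

/-- The kernel `H_σ(k) = i k e^{-k² σ}`. -/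
noncomputable def Hker (σ : ℝ) (k : ℤ) : ℂ :=
  Complex.I * (k : ℂ) * Complex.exp (-(k : ℂ) ^ 2 * (σ : ℂ))

/-- The vertex function `V(σ, k₁) = (1/2) ∑_{k₂ ≠ 0} H_σ(k₁ + k₂) e^{-k₂² σ}`. -/
noncomputable def Vfun (σ : ℝ) (k₁ : ℤ) : ℂ :=
  (1/2 : ℂ) * ∑' k₂ : ℤ,
    (if k₂ ≠ 0 then Hker σ (k₁ + k₂) * Complex.exp (-(k₂ : ℂ) ^ 2 * (σ : ℂ)) else 0)

/-!
Pairing `k₂` with `-k₁ - k₂` preserves the exponent `(k₁ + k₂)² + k₂²` of a summand of `V(σ, k₁)`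
and turns the prefactors `k₁ + k₂` and `-k₂` into `k₁` (the cancellation behind `V(σ, 0) = 0`), so
`|V(σ, k₁)| ≤ |k₁|/4 · ∑ exp(-((k₁ + k₂)² + k₂²) σ)`. Integrating in `σ` leaves
`|k₁|/4 · ∑ 1/((k₁ + k₂)² + k₂²)`. The exponent dominates both `k₁²/2` and `(1 + k₂²)/2`, so
weighted AM-GM with weights `(1 - ε)/2`, `(1 + ε)/2` bounds the summand by
`2 |k₁|^(ε-1) (1 + k₂²)^(-(1+ε)/2)`, which is summable in `k₂` as soon as `ε > 0`.
-/

open MeasureTheory Set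

noncomputable def vertexExponent (k₁ k₂ : ℤ) : ℝ := ((k₁ : ℝ) + k₂) ^ 2 + (k₂ : ℝ) ^ 2

noncomputable def vertexTerm (σ : ℝ) (k₁ k₂ : ℤ) : ℂ :=
  if k₂ ≠ 0 then Hker σ (k₁ + k₂) * Complex.exp (-(k₂ : ℂ) ^ 2 * (σ : ℂ)) else 0

section VertexExponent

variable (k₁ k₂ : ℤ)

lemma vertexExponent_neg_sub : vertexExponent k₁ (-k₁ - k₂) = vertexExponent k₁ k₂ := by
  simp only [vertexExponent]; push_cast; ring

lemma sq_le_vertexExponent : (k₂ : ℝ) ^ 2 ≤ vertexExponent k₁ k₂ :=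
  le_add_of_nonneg_left (sq_nonneg _)

lemma sq_le_two_mul_vertexExponent : (k₁ : ℝ) ^ 2 ≤ 2 * vertexExponent k₁ k₂ := by
  rw [vertexExponent]
  nlinarith [sq_nonneg ((k₁ : ℝ) + 2 * k₂)]

variable {k₁} in
lemma one_add_sq_le_two_mul_vertexExponent (hk₁ : k₁ ≠ 0) :
    1 + (k₂ : ℝ) ^ 2 ≤ 2 * vertexExponent k₁ k₂ := by
  rcases eq_or_ne k₂ 0 with rfl | hk₂
  · have : (1 : ℝ) ≤ (k₁ : ℝ) ^ 2 := mod_cast (one_le_sq_iff_one_le_abs _).mpr (Int.one_le_abs hk₁)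
    simp only [vertexExponent, Int.cast_zero, add_zero]
    linarith
  · have : (1 : ℝ) ≤ (k₂ : ℝ) ^ 2 := mod_cast (one_le_sq_iff_one_le_abs _).mpr (Int.one_le_abs hk₂)
    linarith [sq_le_vertexExponent k₁ k₂]

lemma exp_neg_vertexExponent_mul_le {σ : ℝ} (hσ : 0 ≤ σ) :
    Real.exp (-vertexExponent k₁ k₂ * σ) ≤ Real.exp (-σ * (k₂ : ℝ) ^ 2) :=
  Real.exp_le_exp.mpr <| by nlinarith [sq_le_vertexExponent k₁ k₂]

end VertexExponent

lemma summable_abs_pow_mul_exp_neg_mul_sq (m : ℕ) {σ : ℝ} (hσ : 0 < σ) :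
    Summable fun k : ℤ => |(k : ℝ)| ^ m * Real.exp (-σ * (k : ℝ) ^ 2) := by
  have hnat := Real.summable_pow_mul_exp_neg_nat_mul m hσ
  have hle (n : ℕ) : Real.exp (-σ * ((n : ℝ)) ^ 2) ≤ Real.exp (-σ * n) := by
    have : (n : ℝ) ≤ (n : ℝ) ^ 2 := by exact_mod_cast Nat.le_self_pow two_ne_zero n
    exact Real.exp_le_exp.mpr (by nlinarith)
  rw [summable_int_iff_summable_nat_and_neg]
  constructor <;> refine hnat.of_nonneg_of_le (fun _ => by positivity) fun n => ?_ <;>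
    simpa using mul_le_mul_of_nonneg_left (hle n) (by positivity)

section VertexTerm

variable {σ : ℝ} (k₁ k₂ : ℤ)

variable (σ) in
lemma Vfun_eq_tsum_vertexTerm : Vfun σ k₁ = 1 / 2 * ∑' k₂, vertexTerm σ k₁ k₂ := rfl

variable (σ) in
lemma vertexTerm_eq : vertexTerm σ k₁ k₂ = if k₂ ≠ 0 then
    Complex.I * ((k₁ + k₂ : ℤ) : ℂ) * (Real.exp (-vertexExponent k₁ k₂ * σ) : ℂ) else 0 := by
  unfold vertexTerm
  split_ifs
  · rw [Hker, mul_assoc, ← Complex.exp_add, Complex.ofReal_exp]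
    congr 2
    simp only [vertexExponent]
    push_cast
    ring
  · rfl

lemma norm_vertexTerm_le (hσ : 0 ≤ σ) :
    ‖vertexTerm σ k₁ k₂‖ ≤ (|(k₁ : ℝ)| + |(k₂ : ℝ)|) * Real.exp (-σ * (k₂ : ℝ) ^ 2) := by
  rw [vertexTerm_eq]
  split_ifs
  · rw [norm_mul, norm_mul, Complex.norm_I, one_mul, Complex.norm_intCast, Complex.norm_real,
      Real.norm_of_nonneg (Real.exp_pos _).le]
    push_cast
    exact mul_le_mul (abs_add_le _ _) (exp_neg_vertexExponent_mul_le k₁ k₂ hσ)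
      (Real.exp_pos _).le (by positivity)
  · rw [norm_zero]
    positivity

lemma summable_norm_vertexTerm (hσ : 0 < σ) : Summable fun k₂ => ‖vertexTerm σ k₁ k₂‖ :=
  .of_nonneg_of_le (fun _ => norm_nonneg _)
    (fun k₂ => (norm_vertexTerm_le k₁ k₂ hσ.le).trans_eq (by ring))
    (((summable_abs_pow_mul_exp_neg_mul_sq 0 hσ).mul_left |(k₁ : ℝ)|).add
      (summable_abs_pow_mul_exp_neg_mul_sq 1 hσ))

lemma summable_exp_neg_vertexExponent_mul (hσ : 0 < σ) :
    Summable fun k₂ => Real.exp (-vertexExponent k₁ k₂ * σ) :=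
  .of_nonneg_of_le (fun _ => (Real.exp_pos _).le)
    (fun k₂ => (exp_neg_vertexExponent_mul_le k₁ k₂ hσ.le).trans_eq (by ring))
    (summable_abs_pow_mul_exp_neg_mul_sq 0 hσ)

variable (σ) in
lemma norm_vertexTerm_add_vertexTerm_neg_sub_le :
    ‖vertexTerm σ k₁ k₂ + vertexTerm σ k₁ (-k₁ - k₂)‖ ≤
      |(k₁ : ℝ)| * Real.exp (-vertexExponent k₁ k₂ * σ) := by
  have hE := mul_nonneg (abs_nonneg (k₁ : ℝ)) (Real.exp_pos (-vertexExponent k₁ k₂ * σ)).le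
  rw [vertexTerm_eq, vertexTerm_eq, vertexExponent_neg_sub]
  by_cases h₀ : k₂ = 0
  · subst h₀; simpa using hE
  by_cases h₁ : -k₁ - k₂ = 0
  · obtain rfl : k₂ = -k₁ := by omega
    simpa using hE
  rw [if_pos h₀, if_pos h₁, ← add_mul, ← mul_add,
    show ((k₁ + k₂ : ℤ) : ℂ) + ((k₁ + (-k₁ - k₂) : ℤ) : ℂ) = k₁ by push_cast; ring,
    norm_mul, norm_mul, Complex.norm_I, one_mul, Complex.norm_real,
    Real.norm_of_nonneg (Real.exp_pos _).le, Complex.norm_intCast]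

lemma two_mul_tsum_vertexTerm (hσ : 0 < σ) :
    2 * ∑' k₂, vertexTerm σ k₁ k₂ = ∑' k₂, (vertexTerm σ k₁ k₂ + vertexTerm σ k₁ (-k₁ - k₂)) := by
  have hT := (summable_norm_vertexTerm k₁ hσ).of_norm
  have hreflect : ∑' k₂, vertexTerm σ k₁ (-k₁ - k₂) = ∑' k₂, vertexTerm σ k₁ k₂ :=
    (Equiv.subLeft (-k₁)).tsum_eq _
  have hT' : Summable fun k₂ => vertexTerm σ k₁ (-k₁ - k₂) :=
    hT.comp_injective (sub_right_injective (b := -k₁))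
  rw [hT.tsum_add hT', hreflect, two_mul]

lemma norm_Vfun_le (hσ : 0 < σ) :
    ‖Vfun σ k₁‖ ≤ |(k₁ : ℝ)| / 4 * ∑' k₂, Real.exp (-vertexExponent k₁ k₂ * σ) := by
  have hpair : Summable fun k₂ => ‖vertexTerm σ k₁ k₂ + vertexTerm σ k₁ (-k₁ - k₂)‖ :=
    .of_nonneg_of_le (fun _ => norm_nonneg _)
      (norm_vertexTerm_add_vertexTerm_neg_sub_le σ k₁ ·)
      ((summable_exp_neg_vertexExponent_mul k₁ hσ).mul_left _)
  calc ‖Vfun σ k₁‖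
      = ‖∑' k₂, (vertexTerm σ k₁ k₂ + vertexTerm σ k₁ (-k₁ - k₂))‖ / 4 := by
        rw [← two_mul_tsum_vertexTerm k₁ hσ, Vfun_eq_tsum_vertexTerm, norm_mul, norm_mul]
        norm_num
        ring
    _ ≤ (∑' k₂, ‖vertexTerm σ k₁ k₂ + vertexTerm σ k₁ (-k₁ - k₂)‖) / 4 :=
        div_le_div_of_nonneg_right (norm_tsum_le_tsum_norm hpair) (by norm_num)
    _ ≤ (∑' k₂, |(k₁ : ℝ)| * Real.exp (-vertexExponent k₁ k₂ * σ)) / 4 :=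
        div_le_div_of_nonneg_right
          (hpair.tsum_le_tsum (norm_vertexTerm_add_vertexTerm_neg_sub_le σ k₁ ·)
            ((summable_exp_neg_vertexExponent_mul k₁ hσ).mul_left _)) (by norm_num)
    _ = |(k₁ : ℝ)| / 4 * ∑' k₂, Real.exp (-vertexExponent k₁ k₂ * σ) := by
        rw [tsum_mul_left]; ring

end VertexTerm

lemma lintegral_Ioi_exp_neg_mul {a : ℝ} (ha : 0 < a) :
    ∫⁻ σ in Ioi (0 : ℝ), ENNReal.ofReal (Real.exp (-a * σ)) = ENNReal.ofReal a⁻¹ := by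
  rw [← ofReal_integral_eq_lintegral_ofReal (exp_neg_integrableOn_Ioi 0 ha)
    (ae_of_all _ fun _ => (Real.exp_pos _).le), integral_exp_mul_Ioi (neg_neg_of_pos ha)]
  simp

lemma lintegral_norm_Vfun_le {k₁ : ℤ} (hk₁ : k₁ ≠ 0) :
    ∫⁻ σ in Ioi (0 : ℝ), ENNReal.ofReal ‖Vfun σ k₁‖ ≤
      ∑' k₂, ENNReal.ofReal (|(k₁ : ℝ)| / (4 * vertexExponent k₁ k₂)) := by
  have hq (k₂ : ℤ) : 0 < vertexExponent k₁ k₂ := by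
    linarith [one_add_sq_le_two_mul_vertexExponent k₂ hk₁, sq_nonneg (k₂ : ℝ)]
  calc ∫⁻ σ in Ioi (0 : ℝ), ENNReal.ofReal ‖Vfun σ k₁‖
      ≤ ∫⁻ σ in Ioi (0 : ℝ), ∑' k₂,
          ENNReal.ofReal (|(k₁ : ℝ)| / 4 * Real.exp (-vertexExponent k₁ k₂ * σ)) := by
        refine setLIntegral_mono' measurableSet_Ioi fun σ (hσ : 0 < σ) => ?_
        rw [← ENNReal.ofReal_tsum_of_nonneg (fun _ => by positivity)
          ((summable_exp_neg_vertexExponent_mul k₁ hσ).mul_left _), tsum_mul_left]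
        exact ENNReal.ofReal_le_ofReal (norm_Vfun_le k₁ hσ)
    _ = ∑' k₂, ∫⁻ σ in Ioi (0 : ℝ),
          ENNReal.ofReal (|(k₁ : ℝ)| / 4 * Real.exp (-vertexExponent k₁ k₂ * σ)) :=
        lintegral_tsum fun _ => by fun_prop
    _ = ∑' k₂, ENNReal.ofReal (|(k₁ : ℝ)| / (4 * vertexExponent k₁ k₂)) := by
        congr 1 with k₂
        simp_rw [ENNReal.ofReal_mul (by positivity : 0 ≤ |(k₁ : ℝ)| / 4)]
        rw [lintegral_const_mul' _ _ ENNReal.ofReal_ne_top, lintegral_Ioi_exp_neg_mul (hq k₂),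
          ← ENNReal.ofReal_mul (by positivity)]
        congr 1
        ring

lemma abs_rpow_mul_one_add_sq_rpow_le {ε : ℝ} (hε₀ : -1 ≤ ε) (hε₁ : ε ≤ 1) {k₁ : ℤ}
    (hk₁ : k₁ ≠ 0) (k₂ : ℤ) :
    |(k₁ : ℝ)| ^ (1 - ε) * (1 + (k₂ : ℝ) ^ 2) ^ ((1 + ε) / 2) ≤ 2 * vertexExponent k₁ k₂ := by
  have hk₁_sq : ((k₁ : ℝ) ^ 2) ^ ((1 - ε) / 2) = |(k₁ : ℝ)| ^ (1 - ε) := by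
    rw [← sq_abs, ← Real.rpow_two, ← Real.rpow_mul (abs_nonneg _)]
    ring_nf
  have hamgm := Real.geom_mean_le_arith_mean2_weighted (p₁ := (k₁ : ℝ) ^ 2)
    (p₂ := 1 + (k₂ : ℝ) ^ 2) (by linarith : 0 ≤ (1 - ε) / 2) (by linarith : 0 ≤ (1 + ε) / 2)
    (sq_nonneg _) (by positivity) (by ring)
  rw [hk₁_sq] at hamgm
  nlinarith [sq_le_two_mul_vertexExponent k₁ k₂, one_add_sq_le_two_mul_vertexExponent k₂ hk₁]

lemma abs_div_four_mul_vertexExponent_le {ε : ℝ} (hε₀ : -1 ≤ ε) (hε₁ : ε ≤ 1) {k₁ : ℤ}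
    (hk₁ : k₁ ≠ 0) (k₂ : ℤ) :
    |(k₁ : ℝ)| / (4 * vertexExponent k₁ k₂) ≤
      |(k₁ : ℝ)| ^ ε / 2 * ((1 + (k₂ : ℝ) ^ 2) ^ ((1 + ε) / 2))⁻¹ := by
  have hk₁_pos : 0 < |(k₁ : ℝ)| := by positivity
  have hR : 0 < (1 + (k₂ : ℝ) ^ 2) ^ ((1 + ε) / 2) := by positivity
  have hprod := abs_rpow_mul_one_add_sq_rpow_le hε₀ hε₁ hk₁ k₂
  have hsplit : |(k₁ : ℝ)| = |(k₁ : ℝ)| ^ (1 - ε) * |(k₁ : ℝ)| ^ ε := by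
    rw [← Real.rpow_add hk₁_pos, sub_add_cancel, Real.rpow_one]
  rw [div_le_iff₀ (by nlinarith [Real.rpow_pos_of_pos hk₁_pos (1 - ε)])]
  nth_rw 1 [hsplit]
  calc |(k₁ : ℝ)| ^ (1 - ε) * |(k₁ : ℝ)| ^ ε
      = |(k₁ : ℝ)| ^ ε * (|(k₁ : ℝ)| ^ (1 - ε) * (1 + (k₂ : ℝ) ^ 2) ^ ((1 + ε) / 2)) *
          ((1 + (k₂ : ℝ) ^ 2) ^ ((1 + ε) / 2))⁻¹ := by field_simp
    _ ≤ |(k₁ : ℝ)| ^ ε * (2 * vertexExponent k₁ k₂) * ((1 + (k₂ : ℝ) ^ 2) ^ ((1 + ε) / 2))⁻¹ := by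
        gcongr
    _ = _ := by ring

lemma summable_inv_one_add_sq_rpow {s : ℝ} (hs : 1 / 2 < s) :
    Summable fun k : ℤ => ((1 + (k : ℝ) ^ 2) ^ s)⁻¹ := by
  refine .of_norm_bounded_eventually (Real.summable_abs_int_rpow (b := 2 * s) (by linarith))
    ((Filter.eventually_cofinite_ne 0).mono fun k hk => ?_)
  rw [Real.norm_of_nonneg (by positivity), Real.rpow_neg (abs_nonneg _),
    Real.rpow_mul (abs_nonneg _), Real.rpow_two, sq_abs]
  gcongr
  linarith

/-- Vertex function estimate: the defining series converges absolutely for each `σ > 0`, and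
for every `ε ∈ (0,1]` there is `C > 0` with `∫₀^∞ |V(σ, k₁)| dσ ≤ C |k₁|^ε` for all
`k₁ ≠ 0`. -/
theorem stmt7 (ε : ℝ) (hε0 : 0 < ε) (hε1 : ε ≤ 1) :
    (∀ σ : ℝ, 0 < σ → ∀ k₁ : ℤ, Summable (fun k₂ : ℤ =>
      ‖(if k₂ ≠ 0 then Hker σ (k₁ + k₂) * Complex.exp (-(k₂ : ℂ) ^ 2 * (σ : ℂ)) else 0)‖)) ∧
    ∃ C : ℝ, 0 < C ∧ ∀ k₁ : ℤ, k₁ ≠ 0 →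
      (∫⁻ σ in Set.Ioi (0:ℝ), ENNReal.ofReal ‖Vfun σ k₁‖)
        ≤ ENNReal.ofReal (C * |(k₁ : ℝ)| ^ ε) := by
  refine ⟨fun σ hσ k₁ => summable_norm_vertexTerm k₁ hσ, ?_⟩
  set w : ℤ → ℝ := fun k => ((1 + (k : ℝ) ^ 2) ^ ((1 + ε) / 2))⁻¹
  have hw : Summable w := summable_inv_one_add_sq_rpow (by linarith)
  have hw_pos : 0 < ∑' k, w k := hw.tsum_pos (fun _ => by positivity) 0 (by positivity)
  refine ⟨(∑' k, w k) / 2, by positivity, fun k₁ hk₁ => ?_⟩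
  calc ∫⁻ σ in Ioi (0 : ℝ), ENNReal.ofReal ‖Vfun σ k₁‖
      ≤ ∑' k₂, ENNReal.ofReal (|(k₁ : ℝ)| / (4 * vertexExponent k₁ k₂)) :=
        lintegral_norm_Vfun_le hk₁
    _ ≤ ∑' k₂, ENNReal.ofReal (|(k₁ : ℝ)| ^ ε / 2 * w k₂) :=
        ENNReal.tsum_le_tsum fun k₂ => ENNReal.ofReal_le_ofReal
          (abs_div_four_mul_vertexExponent_le (by linarith) hε1 hk₁ k₂)
    _ = ENNReal.ofReal ((∑' k, w k) / 2 * |(k₁ : ℝ)| ^ ε) := by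
        rw [← ENNReal.ofReal_tsum_of_nonneg (fun _ => by positivity) (hw.mul_left _),
          tsum_mul_left]
        ring_nf
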